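/- arXiv:2302.07477 — 2 statements merged into one kernel-verified Lean document; each statement's English description precedes it below -/
import Mathlib

section
/- Let P be a uniformly ergodic transition kernel on a nonempty finite set S. Then: (i) for every ε > 0 there exist m' ∈ ℤ_{>0} and p' ∈ (0,1] such that P satisfies the (m',p')-Doeblin condition and m'/p' − ε ≤ t_minorize(P) ≤ m'/p' + ε; and (ii) t_minorize(P) ≤ 22 · t_mix(P) ≤ 22 · log(16) · t_minorize(P). -/
/-! A `(m, p)`-Doeblin minorization makes `P^m` a `(1 - p)`-contraction in total variation
towards the stationary law, so `P` mixes to `1/4` within `⌈log 4 / p⌉ · m ≤ log 16 · m / p`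
steps. Conversely, if all rows of `Q = P^t` are `1/4`-close to `η`, then two rows of `Q`
overlap through `η`: `Q² (s, ·) ≥ ∑ᵤ η u · min (Q u ·) η - η / 4`, a mass of at least `1/2`,
which gives a `(2t, 1/2)` minorization and `t_minorize ≤ 4 t_mix`. -/

open Filter

/-- `P` is a transition kernel on the finite set `S`: nonnegative entries, rows sum to 1. -/
def IsKernel {S : Type*} [Fintype S] (P : Matrix S S ℝ) : Prop :=
  (∀ s s', 0 ≤ P s s') ∧ ∀ s, ∑ s', P s s' = 1

/-- `μ` is a probability distribution on the finite set `S`. -/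
def IsProb {S : Type*} [Fintype S] (μ : S → ℝ) : Prop :=
  (∀ s, 0 ≤ μ s) ∧ ∑ s, μ s = 1

/-- Total variation distance between two distributions on a finite set. -/
noncomputable def tvDist {S : Type*} [Fintype S] (μ ν : S → ℝ) : ℝ :=
  (∑ s, |μ s - ν s|) / 2

/-- Uniform ergodicity: `sup_s ‖P^n(s,·) − η‖_TV → 0`. -/
def UnifErgodic {S : Type*} [Fintype S] [DecidableEq S] (P : Matrix S S ℝ) (η : S → ℝ) : Prop :=
  Tendsto (fun n : ℕ => ⨆ s, tvDist ((P ^ n) s) η) atTop (nhds 0)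

/-- The `(m,p)`-Doeblin minorization condition. -/
def Doeblin {S : Type*} [Fintype S] [DecidableEq S] (P : Matrix S S ℝ) (m : ℕ) (p : ℝ) : Prop :=
  ∃ ψ : S → ℝ, IsProb ψ ∧ ∀ s s', p * ψ s' ≤ (P ^ m) s s'

/-- Mixing time: least `t ≥ 1` with `sup_s ‖P^t(s,·) − η‖_TV ≤ 1/4`. -/
noncomputable def tMix {S : Type*} [Fintype S] [DecidableEq S]
    (P : Matrix S S ℝ) (η : S → ℝ) : ℕ :=
  sInf {t : ℕ | 0 < t ∧ ∀ s, tvDist ((P ^ t) s) η ≤ 1 / 4}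

/-- Minorization time: infimum of `m/p` over valid Doeblin pairs `(m,p)`. -/
noncomputable def tMinorize {S : Type*} [Fintype S] [DecidableEq S] (P : Matrix S S ℝ) : ℝ :=
  sInf {x : ℝ | ∃ (m : ℕ) (p : ℝ), 0 < m ∧ 0 < p ∧ p ≤ 1 ∧ Doeblin P m p ∧ x = m / p}

/-- Separation time for a given minorization pair `(p, ψ)`. -/
noncomputable def tSep {S : Type*} [Fintype S] [DecidableEq S]
    (P : Matrix S S ℝ) (p : ℝ) (ψ : S → ℝ) : ℕ :=
  sInf {m : ℕ | 0 < m ∧ ∀ s s', p * ψ s' ≤ (P ^ m) s s'}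

open Matrix Real

section Kernel

variable {S : Type*} [Fintype S]

lemma IsKernel.isProb_row {P : Matrix S S ℝ} (hP : IsKernel P) (s : S) : IsProb (P s) :=
  ⟨hP.1 s, hP.2 s⟩

lemma IsKernel.mul {P Q : Matrix S S ℝ} (hP : IsKernel P) (hQ : IsKernel Q) :
    IsKernel (P * Q) := by
  refine ⟨fun s s' => Finset.sum_nonneg fun u _ => mul_nonneg (hP.1 s u) (hQ.1 u s'), fun s => ?_⟩
  simp only [mul_apply]
  rw [Finset.sum_comm]
  simp only [← Finset.mul_sum, hQ.2, mul_one, hP.2]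

lemma tvDist_le_one {μ ν : S → ℝ} (hμ : IsProb μ) (hν : IsProb ν) : tvDist μ ν ≤ 1 := by
  have : ∑ s, |μ s - ν s| ≤ ∑ s, (μ s + ν s) := Finset.sum_le_sum fun s _ =>
    (abs_sub _ _).trans_eq (by rw [abs_of_nonneg (hμ.1 s), abs_of_nonneg (hν.1 s)])
  rw [Finset.sum_add_distrib, hμ.2, hν.2] at this
  rw [tvDist]
  linarith

lemma sum_min_eq_one_sub_tvDist {μ ν : S → ℝ} (hμ : IsProb μ) (hν : IsProb ν) :
    ∑ s, min (μ s) (ν s) = 1 - tvDist μ ν := by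
  have hmin : ∀ s, min (μ s) (ν s) = (μ s + ν s - |μ s - ν s|) / 2 := fun s => by
    rcases le_total (μ s) (ν s) with h | h
    · rw [min_eq_left h, abs_of_nonpos (by linarith)]; ring
    · rw [min_eq_right h, abs_of_nonneg (by linarith)]; ring
  simp only [hmin, ← Finset.sum_div, Finset.sum_sub_distrib, Finset.sum_add_distrib, hμ.2, hν.2,
    tvDist]
  ring

/-- Dobrushin's contraction: subtracting the common part `p ψ` of all rows of `Q` does not
change `(μ - ν) ᵥ* Q`, since `μ - ν` has total mass zero. -/
lemma tvDist_vecMul_le {Q : Matrix S S ℝ} (hQ : IsKernel Q) {p : ℝ} {ψ : S → ℝ}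
    (hψ : IsProb ψ) (hmin : ∀ s s', p * ψ s' ≤ Q s s') {μ ν : S → ℝ}
    (hμν : ∑ s, μ s = ∑ s, ν s) :
    tvDist (μ ᵥ* Q) (ν ᵥ* Q) ≤ (1 - p) * tvDist μ ν := by
  have hdiff : ∀ s', (μ ᵥ* Q) s' - (ν ᵥ* Q) s' = ∑ u, (μ u - ν u) * (Q u s' - p * ψ s') := by
    intro s'
    have hzero : ∑ u, μ u * (p * ψ s') - ∑ u, ν u * (p * ψ s') = 0 := by
      rw [← Finset.sum_mul, ← Finset.sum_mul, hμν, sub_self]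
    simp only [vecMul, dotProduct, mul_sub, sub_mul, Finset.sum_sub_distrib, hzero, sub_zero]
  have hsum : ∑ s', |(μ ᵥ* Q) s' - (ν ᵥ* Q) s'| ≤ (1 - p) * ∑ u, |μ u - ν u| :=
    calc ∑ s', |(μ ᵥ* Q) s' - (ν ᵥ* Q) s'|
        ≤ ∑ s', ∑ u, |μ u - ν u| * (Q u s' - p * ψ s') := Finset.sum_le_sum fun s' _ => by
          rw [hdiff]
          refine (Finset.abs_sum_le_sum_abs _ _).trans_eq (Finset.sum_congr rfl fun u _ => ?_)
          rw [abs_mul, abs_of_nonneg (sub_nonneg.mpr (hmin u s'))]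
      _ = ∑ u, |μ u - ν u| * (1 - p) := by
          rw [Finset.sum_comm]
          simp only [← Finset.mul_sum, Finset.sum_sub_distrib, hQ.2, hψ.2, mul_one]
      _ = (1 - p) * ∑ u, |μ u - ν u| := by rw [Finset.mul_sum]; simp only [mul_comm]
  simp only [tvDist]
  linarith

lemma exists_isProb_mul_le {A : Matrix S S ℝ} {ν : S → ℝ} (hν : ∀ s', 0 ≤ ν s') {c : ℝ}
    (hc : 0 < c) (hmass : c ≤ ∑ s', ν s') (hle : ∀ s s', ν s' ≤ A s s') :
    ∃ ψ : S → ℝ, IsProb ψ ∧ ∀ s s', c * ψ s' ≤ A s s' := by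
  have hZ : 0 < ∑ s', ν s' := hc.trans_le hmass
  refine ⟨fun s' => ν s' / ∑ s', ν s',
    ⟨fun s' => div_nonneg (hν s') hZ.le, by rw [← Finset.sum_div, div_self hZ.ne']⟩,
    fun s s' => ?_⟩
  calc c * (ν s' / ∑ s', ν s') = c / (∑ s', ν s') * ν s' := by ring
    _ ≤ 1 * ν s' := by gcongr; exacts [hν s', (div_le_one hZ).mpr hmass]
    _ ≤ A s s' := by rw [one_mul]; exact hle s s'

section Overlap

variable {Q : Matrix S S ℝ} {η : S → ℝ} {δ : ℝ}

lemma sum_overlap_sub_le_mul_self_apply (hQ : IsKernel Q) (hη : IsProb η)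
    (hmix : ∀ u, tvDist (Q u) η ≤ δ) (s s' : S) :
    ∑ u, η u * min (Q u s') (η s') - δ * η s' ≤ (Q * Q) s s' := by
  have hθ : ∀ u, 0 ≤ min (Q u s') (η s') := fun u => le_min (hQ.1 u s') (hη.1 s')
  have hgap : ∑ u, (η u - min (Q s u) (η u)) * min (Q u s') (η s') ≤ δ * η s' :=
    calc ∑ u, (η u - min (Q s u) (η u)) * min (Q u s') (η s')
        ≤ ∑ u, (η u - min (Q s u) (η u)) * η s' := Finset.sum_le_sum fun u _ =>
          mul_le_mul_of_nonneg_left (min_le_right _ _) (sub_nonneg.mpr (min_le_right _ _))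
      _ = tvDist (Q s) η * η s' := by
          rw [← Finset.sum_mul, Finset.sum_sub_distrib, hη.2,
            sum_min_eq_one_sub_tvDist (hQ.isProb_row s) hη, sub_sub_cancel]
      _ ≤ δ * η s' := mul_le_mul_of_nonneg_right (hmix s) (hη.1 s')
  have hpath : ∑ u, min (Q s u) (η u) * min (Q u s') (η s') ≤ (Q * Q) s s' :=
    Finset.sum_le_sum fun u _ =>
      mul_le_mul (min_le_left _ _) (min_le_left _ _) (hθ u) (hQ.1 s u)
  have hsplit : ∑ u, η u * min (Q u s') (η s')
      = ∑ u, (η u - min (Q s u) (η u)) * min (Q u s') (η s')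
        + ∑ u, min (Q s u) (η u) * min (Q u s') (η s') := by
    rw [← Finset.sum_add_distrib]; simp only [sub_mul, sub_add_cancel]
  linarith

lemma one_sub_le_sum_overlap (hQ : IsKernel Q) (hη : IsProb η)
    (hmix : ∀ u, tvDist (Q u) η ≤ δ) :
    1 - δ ≤ ∑ s', ∑ u, η u * min (Q u s') (η s') := by
  rw [Finset.sum_comm]
  calc 1 - δ = ∑ u, η u * (1 - δ) := by rw [← Finset.sum_mul, hη.2, one_mul]
    _ ≤ ∑ u, η u * (1 - tvDist (Q u) η) := Finset.sum_le_sum fun u _ =>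
        mul_le_mul_of_nonneg_left (by linarith [hmix u]) (hη.1 u)
    _ = ∑ u, ∑ s', η u * min (Q u s') (η s') := by
        simp only [← Finset.mul_sum, sum_min_eq_one_sub_tvDist (hQ.isProb_row _) hη]

lemma exists_minorization_mul_self (hQ : IsKernel Q) (hη : IsProb η) (hδ : δ < 1 / 2)
    (hmix : ∀ u, tvDist (Q u) η ≤ δ) :
    ∃ ψ : S → ℝ, IsProb ψ ∧ ∀ s s', (1 - 2 * δ) * ψ s' ≤ (Q * Q) s s' := by
  set M : S → ℝ := fun s' => ∑ u, η u * min (Q u s') (η s')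
  refine exists_isProb_mul_le (ν := fun s' => max (M s' - δ * η s') 0)
    (fun s' => le_max_right _ _) (by linarith) ?_ fun s s' =>
      max_le (sum_overlap_sub_le_mul_self_apply hQ hη hmix s s') ((hQ.mul hQ).1 s s')
  calc 1 - 2 * δ = (1 - δ) - δ * ∑ s', η s' := by rw [hη.2]; ring
    _ ≤ ∑ s', M s' - δ * ∑ s', η s' := by linarith [one_sub_le_sum_overlap hQ hη hmix]
    _ = ∑ s', (M s' - δ * η s') := by rw [Finset.sum_sub_distrib, Finset.mul_sum]
    _ ≤ ∑ s', max (M s' - δ * η s') 0 := Finset.sum_le_sum fun s' _ => le_max_left _ _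

end Overlap

end Kernel

lemma one_sub_pow_ceil_div_le_exp_neg {p : ℝ} (hp : 0 < p) (hp1 : p ≤ 1) (a : ℝ) :
    (1 - p) ^ ⌈a / p⌉₊ ≤ exp (-a) := by
  have hceil : a ≤ ⌈a / p⌉₊ * p := (div_le_iff₀ hp).mp (Nat.le_ceil _)
  calc (1 - p) ^ ⌈a / p⌉₊ ≤ exp (-p) ^ ⌈a / p⌉₊ :=
        pow_le_pow_left₀ (by linarith) (by linarith [add_one_le_exp (-p)]) _
    _ = exp (-(⌈a / p⌉₊ * p)) := by rw [← exp_nat_mul]; ring_nf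
    _ ≤ exp (-a) := exp_le_exp.mpr (by linarith)

section Chain

variable {S : Type*} [Fintype S] [DecidableEq S] {P : Matrix S S ℝ} {η : S → ℝ}

lemma isKernel_one : IsKernel (1 : Matrix S S ℝ) :=
  ⟨fun s s' => by rw [one_apply]; split_ifs <;> norm_num,
    fun s => by simp only [one_apply, Finset.sum_ite_eq, Finset.mem_univ, if_true]⟩

lemma IsKernel.pow (hP : IsKernel P) (n : ℕ) : IsKernel (P ^ n) := by
  induction n with
  | zero => exact pow_zero P ▸ isKernel_one
  | succ n ih => exact pow_succ P n ▸ ih.mul hP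

lemma vecMul_pow_eq_self (hstat : η ᵥ* P = η) (n : ℕ) : η ᵥ* P ^ n = η := by
  induction n with
  | zero => rw [pow_zero, vecMul_one]
  | succ n ih => rw [pow_succ, ← vecMul_vecMul, ih, hstat]

lemma tvDist_pow_mul_le (hP : IsKernel P) (hη : IsProb η) (hstat : η ᵥ* P = η)
    {m : ℕ} {p : ℝ} (hp1 : p ≤ 1) {ψ : S → ℝ} (hψ : IsProb ψ)
    (hmin : ∀ s s', p * ψ s' ≤ (P ^ m) s s') (k : ℕ) (s : S) :
    tvDist ((P ^ (k * m)) s) η ≤ (1 - p) ^ k := by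
  induction k with
  | zero => simpa using tvDist_le_one ((hP.pow 0).isProb_row s) hη
  | succ k ih =>
    have hmass : ∑ u, (P ^ (k * m)) s u = ∑ u, η u := by rw [(hP.pow _).2, hη.2]
    calc tvDist ((P ^ ((k + 1) * m)) s) η
        = tvDist ((P ^ (k * m)) s ᵥ* P ^ m) (η ᵥ* P ^ m) := by
          rw [add_one_mul, pow_add, mul_apply_eq_vecMul, vecMul_pow_eq_self hstat]
      _ ≤ (1 - p) * tvDist ((P ^ (k * m)) s) η := tvDist_vecMul_le (hP.pow m) hψ hmin hmass
      _ ≤ (1 - p) * (1 - p) ^ k := by gcongr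
      _ = (1 - p) ^ (k + 1) := (pow_succ' _ _).symm

lemma tMix_le {n : ℕ} (hn : 0 < n) (hmix : ∀ s, tvDist ((P ^ n) s) η ≤ 1 / 4) :
    tMix P η ≤ n :=
  Nat.sInf_le ⟨hn, hmix⟩

lemma UnifErgodic.tMix_spec (hUE : UnifErgodic P η) :
    0 < tMix P η ∧ ∀ s, tvDist ((P ^ tMix P η) s) η ≤ 1 / 4 := by
  obtain ⟨n, hsup, hn⟩ :=
    ((hUE.eventually (gt_mem_nhds (by norm_num : (0 : ℝ) < 1 / 4))).and
      (eventually_gt_atTop 0)).exists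
  exact Nat.sInf_mem (s := {t | 0 < t ∧ ∀ s, tvDist ((P ^ t) s) η ≤ 1 / 4}) ⟨n, hn, fun s =>
    (le_ciSup (Set.finite_range fun s => tvDist ((P ^ n) s) η).bddAbove s).trans hsup.le⟩

lemma tMinorize_le {m : ℕ} {p : ℝ} (hm : 0 < m) (hp : 0 < p) (hp1 : p ≤ 1)
    (hD : Doeblin P m p) : tMinorize P ≤ m / p :=
  csInf_le ⟨0, by rintro _ ⟨m, p, -, hp, -, -, rfl⟩; positivity⟩ ⟨m, p, hm, hp, hp1, hD, rfl⟩

lemma le_tMinorize {m : ℕ} {p : ℝ} (hm : 0 < m) (hp : 0 < p) (hp1 : p ≤ 1)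
    (hD : Doeblin P m p) {c : ℝ}
    (hc : ∀ (m : ℕ) (p : ℝ), 0 < m → 0 < p → p ≤ 1 → Doeblin P m p → c ≤ m / p) :
    c ≤ tMinorize P :=
  le_csInf ⟨_, m, p, hm, hp, hp1, hD, rfl⟩ <| by
    rintro _ ⟨m, p, hm, hp, hp1, hD, rfl⟩
    exact hc m p hm hp hp1 hD

lemma exists_doeblin_near_tMinorize {m : ℕ} {p : ℝ} (hm : 0 < m) (hp : 0 < p) (hp1 : p ≤ 1)
    (hD : Doeblin P m p) {ε : ℝ} (hε : 0 < ε) :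
    ∃ (m' : ℕ) (p' : ℝ), 0 < m' ∧ 0 < p' ∧ p' ≤ 1 ∧ Doeblin P m' p' ∧
      (m' : ℝ) / p' - ε ≤ tMinorize P ∧ tMinorize P ≤ (m' : ℝ) / p' + ε := by
  obtain ⟨_, ⟨m', p', hm', hp', hp1', hD', rfl⟩, hlt⟩ :=
    Real.lt_sInf_add_pos (s := {x | ∃ (m : ℕ) (p : ℝ), 0 < m ∧ 0 < p ∧ p ≤ 1 ∧ Doeblin P m p ∧
      x = m / p}) ⟨_, m, p, hm, hp, hp1, hD, rfl⟩ hε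
  have hle := tMinorize_le hm' hp' hp1' hD'
  exact ⟨m', p', hm', hp', hp1', hD', by unfold tMinorize; linarith, by linarith⟩

lemma tMix_le_log_sixteen_mul (hP : IsKernel P) (hη : IsProb η) (hstat : η ᵥ* P = η)
    {m : ℕ} {p : ℝ} (hm : 0 < m) (hp : 0 < p) (hp1 : p ≤ 1) (hD : Doeblin P m p) :
    (tMix P η : ℝ) ≤ log 16 * (m / p) := by
  obtain ⟨ψ, hψ, hmin⟩ := hD
  set k := ⌈log 4 / p⌉₊
  have hk : 0 < k := Nat.ceil_pos.mpr (by positivity)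
  have hmix : tMix P η ≤ k * m := tMix_le (Nat.mul_pos hk hm) fun s =>
    (tvDist_pow_mul_le hP hη hstat hp1 hψ hmin k s).trans <|
      (one_sub_pow_ceil_div_le_exp_neg hp hp1 _).trans_eq (by rw [exp_neg, exp_log] <;> norm_num)
  have hk_le : (k : ℝ) ≤ log 4 / p + 1 := (Nat.ceil_lt_add_one (by positivity)).le
  have hm_le : (m : ℝ) ≤ m / p := le_div_self (Nat.cast_nonneg m) hp hp1
  have hlog4 : 1 ≤ log 4 := by
    rw [le_log_iff_exp_le (by norm_num)]
    linarith [exp_one_lt_d9]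
  have hlog16 : log 16 = 2 * log 4 := by
    rw [show (16 : ℝ) = 4 ^ 2 by norm_num, log_pow]; push_cast; ring
  calc (tMix P η : ℝ) ≤ k * m := by exact_mod_cast hmix
    _ ≤ (log 4 / p + 1) * m := by gcongr
    _ = log 4 * (m / p) + m := by ring
    _ ≤ log 16 * (m / p) := by rw [hlog16]; nlinarith

end Chain

theorem tminorize_tmix_equiv_general
    {S : Type*} [Fintype S] [DecidableEq S]
    (P : Matrix S S ℝ) (hP : IsKernel P)
    (η : S → ℝ) (hη : IsProb η) (hstat : ∀ s', ∑ s, η s * P s s' = η s')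
    (hUE : UnifErgodic P η) :
    (∀ ε : ℝ, 0 < ε → ∃ (m' : ℕ) (p' : ℝ), 0 < m' ∧ 0 < p' ∧ p' ≤ 1 ∧ Doeblin P m' p' ∧
      (m' : ℝ) / p' - ε ≤ tMinorize P ∧ tMinorize P ≤ (m' : ℝ) / p' + ε) ∧
    tMinorize P ≤ 22 * (tMix P η : ℝ) ∧
    22 * (tMix P η : ℝ) ≤ 22 * Real.log 16 * tMinorize P := by
  obtain ⟨ht, hmix⟩ := hUE.tMix_spec
  obtain ⟨ψ, hψ, hmin⟩ :=
    exists_minorization_mul_self (hP.pow _) hη (by norm_num : (1 / 4 : ℝ) < 1 / 2) hmix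
  have hD : Doeblin P (2 * tMix P η) (1 / 2) :=
    ⟨ψ, hψ, fun s s' => by rw [two_mul, pow_add]; linarith [hmin s s']⟩
  have h2t : 0 < 2 * tMix P η := by omega
  have hupper : tMinorize P ≤ 4 * tMix P η :=
    (tMinorize_le h2t (by norm_num) (by norm_num) hD).trans_eq (by push_cast; ring)
  have hlog : 0 < log 16 := log_pos (by norm_num)
  have hlower : (tMix P η : ℝ) ≤ log 16 * tMinorize P := by
    rw [← div_le_iff₀' hlog]
    exact le_tMinorize h2t (by norm_num) (by norm_num) hD fun m p hm hp hp1 hDmp =>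
      (div_le_iff₀' hlog).mpr (tMix_le_log_sixteen_mul hP hη (funext hstat) hm hp hp1 hDmp)
  exact ⟨fun ε hε => exists_doeblin_near_tMinorize h2t (by norm_num) (by norm_num) hD hε,
    by linarith, by linarith⟩

/-- for a uniformly ergodic kernel `P`: (i) for every `ε > 0` there is a Doeblin
pair `(m',p')` with `m'/p' − ε ≤ t_minorize(P) ≤ m'/p' + ε`; and (ii)
`t_minorize(P) ≤ 22·t_mix(P) ≤ 22·log(16)·t_minorize(P)`. -/
theorem tminorize_tmix_equiv
    {S : Type*} [Fintype S] [Nonempty S] [DecidableEq S]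
    (P : Matrix S S ℝ) (hP : IsKernel P)
    (η : S → ℝ) (hη : IsProb η) (hstat : ∀ s', ∑ s, η s * P s s' = η s')
    (hUE : UnifErgodic P η) :
    (∀ ε : ℝ, 0 < ε → ∃ (m' : ℕ) (p' : ℝ), 0 < m' ∧ 0 < p' ∧ p' ≤ 1 ∧ Doeblin P m' p' ∧
      (m' : ℝ) / p' - ε ≤ tMinorize P ∧ tMinorize P ≤ (m' : ℝ) / p' + ε) ∧
    tMinorize P ≤ 22 * (tMix P η : ℝ) ∧
    22 * (tMix P η : ℝ) ≤ 22 * Real.log 16 * tMinorize P :=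
  tminorize_tmix_equiv_general P hP η hη hstat hUE
end

section
/- Let M = (S, A, r, P, γ) be a finite discounted MDP such that every optimal policy π induces a kernel P_π satisfying an (m^π, p^π)-Doeblin condition, and set t* = max over optimal π of m^π/p^π. If t* ≤ 1/(1−γ), then max over optimal policies π of max_{(s,a)} ν^π(M)(s,a)² ≤ 6400 · t* / (1−γ)². -/
/-!
Fix an optimal `π` and put `t = m^π / p^π`, `N = (1 - γ P^π)⁻¹`. Optimality gives
`q* = r + γ P^π q*` and `σ(q*)² = γ² Var_{P^π} q*`, a variance that is unchanged by shifting `q*`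
by a constant. Unrolling the Bellman equation of `V^π = q*(·, π ·)` for `m` steps and using the
Doeblin minorization bounds the oscillation of `V^π` by `t`, hence that of `q*` by `1 + t ≤ 2t`.
For a suitable constant `c`, `w = q* - c` satisfies `|w| ≤ t` and `(1 - γ P^π) w = ρ` with
`|ρ| ≤ 1`, so `γ² Var w ≤ γ² P^π w² - w² + 2t`; the nonnegative resolvent `N`, with row sums
`1/(1-γ)`, turns this into `N σ² ≤ 2t/(1-γ)`, and `N(x, y)² ≤ N(x, y)/(1-γ)` finishes.
-/

open Finset Matrix

section Weights

variable {X : Type*} [Fintype X] {μ ν f : X → ℝ}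

theorem sum_mul_le_sum_mul_const {c : ℝ} (hμ : ∀ y, 0 ≤ μ y) (hf : ∀ y, f y ≤ c) :
    ∑ y, μ y * f y ≤ (∑ y, μ y) * c := by
  rw [sum_mul]
  exact sum_le_sum fun y _ => mul_le_mul_of_nonneg_left (hf y) (hμ y)

theorem sum_mul_const_le_sum_mul {c : ℝ} (hμ : ∀ y, 0 ≤ μ y) (hf : ∀ y, c ≤ f y) :
    (∑ y, μ y) * c ≤ ∑ y, μ y * f y := by
  rw [sum_mul]
  exact sum_le_sum fun y _ => mul_le_mul_of_nonneg_left (hf y) (hμ y)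

theorem sum_mul_sub_sum_mul_le {D : ℝ} (hμ : ∀ y, 0 ≤ μ y) (hν : ∀ y, 0 ≤ ν y)
    (hmass : ∑ y, μ y = ∑ y, ν y) (hf : ∀ y y', f y - f y' ≤ D) :
    ∑ y, μ y * f y - ∑ y, ν y * f y ≤ (∑ y, μ y) * D := by
  cases isEmpty_or_nonempty X
  · simp
  obtain ⟨y₀, hy₀⟩ := Finite.exists_min f
  have hup := sum_mul_le_sum_mul_const hμ fun y => (by linarith [hf y y₀] : f y ≤ f y₀ + D)
  have hlow := sum_mul_const_le_sum_mul hν hy₀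
  rw [← hmass] at hlow
  linarith

theorem exists_mem_Icc_forall_abs_sub_le [Nonempty X] {a b t : ℝ} (ha : ∀ y, a ≤ f y)
    (hb : ∀ y, f y ≤ b) (hf : ∀ y y', f y - f y' ≤ 2 * t) :
    ∃ c ∈ Set.Icc a b, ∀ y, |f y - c| ≤ t := by
  obtain ⟨y₀, hy₀⟩ := Finite.exists_min f
  obtain ⟨y₁, hy₁⟩ := Finite.exists_max f
  refine ⟨(f y₀ + f y₁) / 2, ⟨by linarith [ha y₀, hy₀ y₁], by linarith [hb y₁, hy₀ y₁]⟩,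
    fun y => abs_le.2 ⟨?_, ?_⟩⟩ <;> linarith [hy₀ y, hy₁ y, hf y₁ y₀]

end Weights

namespace Matrix

variable {X : Type*} [Fintype X] [DecidableEq X] {M : Matrix X X ℝ}

theorem mulVec_le_of_mem_rowStochastic (hM : M ∈ rowStochastic ℝ X) {v : X → ℝ} {c : ℝ}
    (hv : ∀ y, v y ≤ c) (x : X) : (M *ᵥ v) x ≤ c := by
  have := sum_mul_le_sum_mul_const (fun y => nonneg_of_mem_rowStochastic hM (i := x) (j := y)) hv
  rwa [sum_row_of_mem_rowStochastic hM x, one_mul] at this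

theorem le_mulVec_of_mem_rowStochastic (hM : M ∈ rowStochastic ℝ X) {v : X → ℝ} {c : ℝ}
    (hv : ∀ y, c ≤ v y) (x : X) : c ≤ (M *ᵥ v) x := by
  have := sum_mul_const_le_sum_mul (fun y => nonneg_of_mem_rowStochastic hM (i := x) (j := y)) hv
  rwa [sum_row_of_mem_rowStochastic hM x, one_mul] at this

theorem mulVec_const_of_mem_rowStochastic (hM : M ∈ rowStochastic ℝ X) (c : ℝ) :
    M *ᵥ (fun _ => c) = fun _ => c := by
  ext x
  simp [mulVec, dotProduct, ← sum_mul, sum_row_of_mem_rowStochastic hM x]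

def rowVariance (M : Matrix X X ℝ) (v : X → ℝ) (x : X) : ℝ :=
  (M *ᵥ fun y => v y ^ 2) x - (M *ᵥ v) x ^ 2

theorem rowVariance_nonneg (hM : M ∈ rowStochastic ℝ X) (v : X → ℝ) (x : X) :
    0 ≤ rowVariance M v x := by
  have := (Even.convexOn_pow (𝕜 := ℝ) even_two).map_sum_le (t := univ) (w := M x) (p := v)
    (fun y _ => nonneg_of_mem_rowStochastic hM) (sum_row_of_mem_rowStochastic hM x)
    (fun _ _ => Set.mem_univ _)
  simp only [smul_eq_mul] at this
  simp only [rowVariance, mulVec, dotProduct]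
  linarith

theorem rowVariance_sub_const (hM : M ∈ rowStochastic ℝ X) (v : X → ℝ) (c : ℝ) :
    rowVariance M (fun y => v y - c) = rowVariance M v := by
  ext x
  have h2 (y : X) :
      M x y * (v y - c) ^ 2 = M x y * v y ^ 2 - 2 * c * (M x y * v y) + c ^ 2 * M x y := by
    ring
  have h1 (y : X) : M x y * (v y - c) = M x y * v y - c * M x y := by ring
  simp only [rowVariance, mulVec, dotProduct, h1, h2, sum_add_distrib, sum_sub_distrib, ← mul_sum,
    sum_row_of_mem_rowStochastic hM x]
  ring

section Resolvent

variable {γ : ℝ}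

theorem one_sub_smul_mulVec_apply (v : X → ℝ) (x : X) :
    ((1 - γ • M) *ᵥ v) x = v x - γ * (M *ᵥ v) x := by
  simp [sub_mulVec, smul_mulVec]

/-- Maximum principle for the resolvent: look at a minimum of `v`. -/
theorem nonneg_of_one_sub_smul_mulVec_nonneg (hM : M ∈ rowStochastic ℝ X) (hγ0 : 0 ≤ γ)
    (hγ1 : γ < 1) {v : X → ℝ} (hv : ∀ x, 0 ≤ ((1 - γ • M) *ᵥ v) x) (x : X) : 0 ≤ v x := by
  by_contra! hx
  have : Nonempty X := ⟨x⟩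
  obtain ⟨y, hy⟩ := Finite.exists_min v
  have hMv := le_mulVec_of_mem_rowStochastic hM hy y
  have hvy := hv y
  rw [one_sub_smul_mulVec_apply] at hvy
  nlinarith [hy x, mul_le_mul_of_nonneg_left hMv hγ0]

theorem isUnit_det_one_sub_smul (hM : M ∈ rowStochastic ℝ X) (hγ0 : 0 ≤ γ) (hγ1 : γ < 1) :
    IsUnit (1 - γ • M).det := by
  rw [isUnit_iff_ne_zero, Ne, ← exists_mulVec_eq_zero_iff]
  rintro ⟨v, hv0, hv⟩
  refine hv0 (funext fun x => le_antisymm ?_ ?_)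
  · simpa using
      nonneg_of_one_sub_smul_mulVec_nonneg hM hγ0 hγ1 (v := -v) (by simp [mulVec_neg, hv]) x
  · simpa using nonneg_of_one_sub_smul_mulVec_nonneg hM hγ0 hγ1 (v := v) (by simp [hv]) x

theorem inv_one_sub_smul_mulVec_nonneg (hM : M ∈ rowStochastic ℝ X) (hγ0 : 0 ≤ γ) (hγ1 : γ < 1)
    {f : X → ℝ} (hf : ∀ y, 0 ≤ f y) (x : X) : 0 ≤ ((1 - γ • M)⁻¹ *ᵥ f) x := by
  refine nonneg_of_one_sub_smul_mulVec_nonneg hM hγ0 hγ1 (fun y => ?_) x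
  rw [mulVec_mulVec, mul_nonsing_inv _ (isUnit_det_one_sub_smul hM hγ0 hγ1), one_mulVec]
  exact hf y

theorem inv_one_sub_smul_mulVec_mono (hM : M ∈ rowStochastic ℝ X) (hγ0 : 0 ≤ γ) (hγ1 : γ < 1)
    {f g : X → ℝ} (hfg : ∀ y, f y ≤ g y) (x : X) :
    ((1 - γ • M)⁻¹ *ᵥ f) x ≤ ((1 - γ • M)⁻¹ *ᵥ g) x := by
  have := inv_one_sub_smul_mulVec_nonneg hM hγ0 hγ1 (f := g - f) (fun y => by simp [hfg y]) x
  rw [mulVec_sub] at this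
  simpa using this

theorem inv_one_sub_smul_nonneg (hM : M ∈ rowStochastic ℝ X) (hγ0 : 0 ≤ γ) (hγ1 : γ < 1)
    (x y : X) : 0 ≤ (1 - γ • M)⁻¹ x y := by
  have := inv_one_sub_smul_mulVec_nonneg hM hγ0 hγ1 (f := Pi.single y 1)
    (fun z => by by_cases h : z = y <;> simp [h]) x
  simpa [mulVec_single_one] using this

theorem inv_one_sub_smul_mulVec_const (hM : M ∈ rowStochastic ℝ X) (hγ0 : 0 ≤ γ) (hγ1 : γ < 1)
    (c : ℝ) : (1 - γ • M)⁻¹ *ᵥ (fun _ => c) = fun _ => c / (1 - γ) := by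
  have hconst : (1 - γ • M) *ᵥ (fun _ => c / (1 - γ)) = fun _ => c := by
    ext x
    rw [one_sub_smul_mulVec_apply, mulVec_const_of_mem_rowStochastic hM]
    field_simp [(by linarith : (1 : ℝ) - γ ≠ 0)]
  rw [← hconst, mulVec_mulVec, nonsing_inv_mul _ (isUnit_det_one_sub_smul hM hγ0 hγ1),
    one_mulVec]

theorem inv_one_sub_smul_le (hM : M ∈ rowStochastic ℝ X) (hγ0 : 0 ≤ γ) (hγ1 : γ < 1)
    (x y : X) : (1 - γ • M)⁻¹ x y ≤ (1 - γ)⁻¹ := by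
  have hsum := congrFun (inv_one_sub_smul_mulVec_const hM hγ0 hγ1 1) x
  simp only [mulVec, dotProduct, mul_one] at hsum
  calc (1 - γ • M)⁻¹ x y ≤ ∑ z, (1 - γ • M)⁻¹ x z :=
        single_le_sum (fun z _ => inv_one_sub_smul_nonneg hM hγ0 hγ1 x z) (mem_univ y)
    _ = (1 - γ)⁻¹ := by rw [hsum, one_div]

theorem inv_one_sub_smul_mulVec_smul_mulVec (hM : M ∈ rowStochastic ℝ X) (hγ0 : 0 ≤ γ)
    (hγ1 : γ < 1) (f : X → ℝ) :
    (1 - γ • M)⁻¹ *ᵥ (γ • (M *ᵥ f)) = (1 - γ • M)⁻¹ *ᵥ f - f := by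
  have h := congrArg (· *ᵥ f) (nonsing_inv_mul _ (isUnit_det_one_sub_smul hM hγ0 hγ1))
  simp only [← mulVec_mulVec, sub_mulVec, one_mulVec, smul_mulVec, mulVec_sub, mulVec_smul] at h
  rw [mulVec_smul]
  linear_combination -h

/-- Since `γ M w = w - ρ`, we have `γ² Var_M w ≤ γ² M w² - w² + 2 w ρ`; the resolvent
telescopes the first two terms to `-w² ≤ 0`. -/
theorem inv_one_sub_smul_mulVec_rowVariance_le (hM : M ∈ rowStochastic ℝ X) (hγ0 : 0 ≤ γ)
    (hγ1 : γ < 1) {w ρ : X → ℝ} {t : ℝ} (hw : (1 - γ • M) *ᵥ w = ρ)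
    (hwρ : ∀ x, w x * ρ x ≤ t) (x : X) :
    ((1 - γ • M)⁻¹ *ᵥ fun y => γ ^ 2 * rowVariance M w y) x ≤ 2 * t / (1 - γ) := by
  set N := (1 - γ • M)⁻¹
  set g : X → ℝ := γ • (M *ᵥ fun y => w y ^ 2)
  have hstep (y : X) : γ * (M *ᵥ w) y = w y - ρ y := by
    rw [← hw, one_sub_smul_mulVec_apply]; ring
  have hpoint (y : X) : γ ^ 2 * rowVariance M w y ≤ γ * g y - w y ^ 2 + 2 * t := by
    have hsq : γ ^ 2 * (M *ᵥ w) y ^ 2 = (w y - ρ y) ^ 2 := by rw [← hstep y]; ring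
    simp only [rowVariance, g, Pi.smul_apply, smul_eq_mul]
    nlinarith [sq_nonneg (ρ y), hwρ y]
  have hg : N *ᵥ g = N *ᵥ (fun y => w y ^ 2) - fun y => w y ^ 2 :=
    inv_one_sub_smul_mulVec_smul_mulVec hM hγ0 hγ1 _
  have hg0 : 0 ≤ (N *ᵥ g) x :=
    inv_one_sub_smul_mulVec_nonneg hM hγ0 hγ1 (fun y => mul_nonneg hγ0
      (le_mulVec_of_mem_rowStochastic hM (fun z => sq_nonneg (w z)) y)) x
  have hsplit : (fun y => γ * g y - w y ^ 2 + 2 * t)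
      = γ • g - (fun y => w y ^ 2) + fun _ => 2 * t := rfl
  calc (N *ᵥ fun y => γ ^ 2 * rowVariance M w y) x
      ≤ (N *ᵥ fun y => γ * g y - w y ^ 2 + 2 * t) x :=
        inv_one_sub_smul_mulVec_mono hM hγ0 hγ1 hpoint x
    _ = γ * (N *ᵥ g) x - (N *ᵥ g) x - w x ^ 2 + 2 * t / (1 - γ) := by
        rw [hsplit, mulVec_add, mulVec_sub, mulVec_smul, inv_one_sub_smul_mulVec_const hM hγ0 hγ1,
          hg]
        simp only [Pi.add_apply, Pi.sub_apply, Pi.smul_apply, smul_eq_mul]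
        ring
    _ ≤ 2 * t / (1 - γ) := by nlinarith [sq_nonneg (w x)]

theorem inv_one_sub_smul_mulVec_rowVariance_le_of_oscillation (hM : M ∈ rowStochastic ℝ X)
    (hγ0 : 0 ≤ γ) (hγ1 : γ < 1) {q ρ : X → ℝ} {t : ℝ} (hq : (1 - γ • M) *ᵥ q = ρ)
    (hρ0 : ∀ x, 0 ≤ ρ x) (hρ1 : ∀ x, ρ x ≤ 1) (hosc : ∀ x x', q x - q x' ≤ 2 * t) (x : X) :
    ((1 - γ • M)⁻¹ *ᵥ fun y => γ ^ 2 * rowVariance M q y) x ≤ 2 * t / (1 - γ) := by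
  have hq_eq : q = (1 - γ • M)⁻¹ *ᵥ ρ := by
    rw [← hq, mulVec_mulVec, nonsing_inv_mul _ (isUnit_det_one_sub_smul hM hγ0 hγ1), one_mulVec]
  have hq1 (y : X) : q y ≤ 1 / (1 - γ) := by
    have := inv_one_sub_smul_mulVec_mono hM hγ0 hγ1 hρ1 y
    rwa [inv_one_sub_smul_mulVec_const hM hγ0 hγ1, ← hq_eq] at this
  have : Nonempty X := ⟨x⟩
  obtain ⟨c, ⟨hc0, hc1⟩, hc⟩ := exists_mem_Icc_forall_abs_sub_le
    (hq_eq ▸ inv_one_sub_smul_mulVec_nonneg hM hγ0 hγ1 hρ0) hq1 hosc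
  have hw : (1 - γ • M) *ᵥ (q - fun _ => c) = ρ - fun _ => (1 - γ) * c := by
    rw [mulVec_sub, hq]
    congr 1
    ext y
    rw [one_sub_smul_mulVec_apply, mulVec_const_of_mem_rowStochastic hM]
    ring
  have hρc (y : X) : |ρ y - (1 - γ) * c| ≤ 1 := by
    have : (1 - γ) * c ≤ 1 := by rwa [le_div_iff₀' (by linarith)] at hc1
    exact abs_le.2 ⟨by nlinarith [hρ0 y], by nlinarith [hρ1 y]⟩
  have hwρ (y : X) : (q y - c) * (ρ y - (1 - γ) * c) ≤ t :=
    calc _ ≤ |q y - c| * |ρ y - (1 - γ) * c| := by rw [← abs_mul]; exact le_abs_self _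
      _ ≤ t * 1 := mul_le_mul (hc y) (hρc y) (abs_nonneg _) ((abs_nonneg _).trans (hc y))
      _ = t := mul_one t
  have hvar := inv_one_sub_smul_mulVec_rowVariance_le hM hγ0 hγ1 hw hwρ x
  rwa [show q - (fun _ => c) = fun y => q y - c from rfl, rowVariance_sub_const hM] at hvar

theorem sum_sq_inv_one_sub_smul_mul_le (hM : M ∈ rowStochastic ℝ X) (hγ0 : 0 ≤ γ)
    (hγ1 : γ < 1) {σ : X → ℝ} (hσ : ∀ y, 0 ≤ σ y) (x : X) :
    ∑ y, (1 - γ • M)⁻¹ x y ^ 2 * σ y ≤ (1 - γ)⁻¹ * ((1 - γ • M)⁻¹ *ᵥ σ) x := by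
  rw [mulVec, dotProduct, mul_sum]
  refine sum_le_sum fun y _ => ?_
  rw [sq, mul_assoc]
  exact mul_le_mul_of_nonneg_right (inv_one_sub_smul_le hM hγ0 hγ1 x y)
    (mul_nonneg (inv_one_sub_smul_nonneg hM hγ0 hγ1 x y) (hσ y))

theorem sum_sq_inv_one_sub_smul_mul_rowVariance_le (hM : M ∈ rowStochastic ℝ X)
    (hγ0 : 0 ≤ γ) (hγ1 : γ < 1) {q ρ : X → ℝ} {t : ℝ} (hq : (1 - γ • M) *ᵥ q = ρ)
    (hρ0 : ∀ x, 0 ≤ ρ x) (hρ1 : ∀ x, ρ x ≤ 1) (hosc : ∀ x x', q x - q x' ≤ 2 * t) (x : X) :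
    ∑ y, (1 - γ • M)⁻¹ x y ^ 2 * (γ ^ 2 * rowVariance M q y) ≤ 2 * t / (1 - γ) ^ 2 :=
  calc _ ≤ (1 - γ)⁻¹ * ((1 - γ • M)⁻¹ *ᵥ fun y => γ ^ 2 * rowVariance M q y) x :=
        sum_sq_inv_one_sub_smul_mul_le hM hγ0 hγ1
          (fun y => mul_nonneg (sq_nonneg γ) (rowVariance_nonneg hM q y)) x
    _ ≤ (1 - γ)⁻¹ * (2 * t / (1 - γ)) := by
        gcongr
        exact inv_one_sub_smul_mulVec_rowVariance_le_of_oscillation hM hγ0 hγ1 hq hρ0 hρ1 hosc x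
    _ = 2 * t / (1 - γ) ^ 2 := by
        field_simp

end Resolvent

theorem eq_sum_pow_mulVec_add_pow_mulVec {R : Type*} [Semiring R] (B : Matrix X X R)
    {u g : X → R} (hu : u = g + B *ᵥ u) (n : ℕ) :
    u = ∑ k ∈ range n, B ^ k *ᵥ g + B ^ n *ᵥ u := by
  induction n with
  | zero => simp
  | succ n ih =>
    calc u = ∑ k ∈ range n, B ^ k *ᵥ g + B ^ n *ᵥ u := ih
      _ = ∑ k ∈ range n, B ^ k *ᵥ g + B ^ n *ᵥ (g + B *ᵥ u) := by rw [← hu]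
      _ = ∑ k ∈ range (n + 1), B ^ k *ᵥ g + B ^ (n + 1) *ᵥ u := by
        rw [mulVec_add, mulVec_mulVec, ← pow_succ, sum_range_succ, add_assoc]

section Doeblin

variable {K : Matrix X X ℝ}

theorem mulVec_sub_mulVec_le_of_minorization (hK : K ∈ rowStochastic ℝ X) {p : ℝ}
    {ψ : X → ℝ} (hψ : ∑ y, ψ y = 1) (hmin : ∀ x y, p * ψ y ≤ K x y) {u : X → ℝ} {D : ℝ}
    (hu : ∀ y y', u y - u y' ≤ D) (x x' : X) :
    (K *ᵥ u) x - (K *ᵥ u) x' ≤ (1 - p) * D := by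
  have hmass (z : X) : ∑ y, (K z y - p * ψ y) = 1 - p := by
    rw [sum_sub_distrib, ← mul_sum, hψ, sum_row_of_mem_rowStochastic hK, mul_one]
  have hsplit (z : X) : (K *ᵥ u) z = ∑ y, (K z y - p * ψ y) * u y + p * ∑ y, ψ y * u y := by
    simp only [sub_mul, sum_sub_distrib, mul_sum, mul_assoc]
    simp [mulVec, dotProduct]
  have := sum_mul_sub_sum_mul_le (fun y => sub_nonneg.2 (hmin x y))
    (fun y => sub_nonneg.2 (hmin x' y)) ((hmass x).trans (hmass x').symm) hu
  rw [hsplit, hsplit, ← hmass x]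
  linarith

theorem sum_range_pow_smul_mulVec_apply_mem_Icc (hK : K ∈ rowStochastic ℝ X) {γ : ℝ}
    (hγ0 : 0 ≤ γ) (hγ1 : γ ≤ 1) {ρ : X → ℝ} (hρ0 : ∀ y, 0 ≤ ρ y) (hρ1 : ∀ y, ρ y ≤ 1)
    (n : ℕ) (x : X) : (∑ k ∈ range n, (γ • K) ^ k *ᵥ ρ) x ∈ Set.Icc 0 (n : ℝ) := by
  have hterm (k : ℕ) : ((γ • K) ^ k *ᵥ ρ) x ∈ Set.Icc 0 1 := by
    have hKk := pow_mem hK k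
    rw [smul_pow, smul_mulVec, Pi.smul_apply, smul_eq_mul]
    exact ⟨mul_nonneg (pow_nonneg hγ0 k) (le_mulVec_of_mem_rowStochastic hKk hρ0 x),
      mul_le_one₀ (pow_le_one₀ hγ0 hγ1) (le_mulVec_of_mem_rowStochastic hKk hρ0 x)
        (mulVec_le_of_mem_rowStochastic hKk hρ1 x)⟩
  rw [Finset.sum_apply]
  exact ⟨sum_nonneg fun k _ => (hterm k).1,
    (sum_le_sum fun k _ => (hterm k).2).trans (by simp)⟩

/-- Unroll `u = ρ + γ K u` for `m` steps: the rewards collected contribute at most `m`, and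
the minorization of `K ^ m` shrinks the remaining oscillation by `1 - p`. -/
theorem sub_le_div_of_doeblin (hK : K ∈ rowStochastic ℝ X) {γ : ℝ} (hγ0 : 0 ≤ γ)
    (hγ1 : γ ≤ 1) {ρ u : X → ℝ} (hρ0 : ∀ y, 0 ≤ ρ y) (hρ1 : ∀ y, ρ y ≤ 1)
    (hu : u = ρ + γ • K *ᵥ u) {m : ℕ} {p : ℝ} (hp0 : 0 < p) (hp1 : p ≤ 1) {ψ : X → ℝ}
    (hψ : ∑ y, ψ y = 1) (hmin : ∀ x y, p * ψ y ≤ (K ^ m) x y) (x x' : X) :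
    u x - u x' ≤ m / p := by
  have hiter := eq_sum_pow_mulVec_add_pow_mulVec (γ • K) (by rwa [smul_mulVec]) m
  rw [smul_pow, smul_mulVec] at hiter
  have hg := sum_range_pow_smul_mulVec_apply_mem_Icc hK hγ0 hγ1 hρ0 hρ1 m
  have : Nonempty X := ⟨x⟩
  obtain ⟨xa, hxa⟩ := Finite.exists_min u
  obtain ⟨xb, hxb⟩ := Finite.exists_max u
  have hD (y y' : X) : u y - u y' ≤ u xb - u xa := by linarith [hxa y', hxb y]
  have hosc := mulVec_sub_mulVec_le_of_minorization (pow_mem hK m) hψ hmin hD xb xa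
  have hcontr : u xb - u xa ≤ m + γ ^ m * ((1 - p) * (u xb - u xa)) := by
    have hb := congrFun hiter xb
    have ha := congrFun hiter xa
    simp only [Pi.add_apply, Pi.smul_apply, smul_eq_mul] at ha hb
    linarith [(hg xb).2, (hg xa).1, mul_le_mul_of_nonneg_left hosc (pow_nonneg hγ0 m)]
  have hγm : γ ^ m * ((1 - p) * (u xb - u xa)) ≤ (1 - p) * (u xb - u xa) :=
    mul_le_of_le_one_left (mul_nonneg (by linarith) (by linarith [hD xb xb]))
      (pow_le_one₀ hγ0 hγ1)
  rw [le_div_iff₀ hp0]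
  nlinarith [hD x x']

end Doeblin

end Matrix

section MDP

variable {S A : Type*} [Fintype S]

/-- The two Bellman equations give equal `P`-averages, and `q s' (π s') ≤ ⨆ b, q s' b`
termwise. -/
theorem mul_iSup_eq_mul_of_bellman [Finite A] {P : S → A → S → ℝ}
    (hP0 : ∀ s a s', 0 ≤ P s a s') {r q : S → A → ℝ} {γ : ℝ} (hγ : γ ≠ 0)
    (hq : ∀ s a, q s a = r s a + γ * ∑ s', P s a s' * (⨆ b, q s' b)) {π : S → A}
    (hπ : ∀ s a, q s a = r s a + γ * ∑ s', P s a s' * q s' (π s')) (s : S) (a : A) (s' : S) :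
    P s a s' * (⨆ b, q s' b) = P s a s' * q s' (π s') := by
  have hsum : ∑ s', P s a s' * q s' (π s') = ∑ s', P s a s' * (⨆ b, q s' b) :=
    mul_left_cancel₀ hγ (by linarith [hq s a, hπ s a])
  exact ((sum_eq_sum_iff_of_le fun s' _ => mul_le_mul_of_nonneg_left
    (le_ciSup (Set.finite_range _).bddAbove _) (hP0 s a s')).1 hsum s' (mem_univ _)).symm

theorem sub_le_one_add_of_bellman {P : S → A → S → ℝ} (hP0 : ∀ s a s', 0 ≤ P s a s')
    (hP1 : ∀ s a, ∑ s', P s a s' = 1) {r q : S → A → ℝ} (hr0 : ∀ s a, 0 ≤ r s a)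
    (hr1 : ∀ s a, r s a ≤ 1) {γ : ℝ} (hγ0 : 0 ≤ γ) (hγ1 : γ ≤ 1) {π : S → A}
    (hπ : ∀ s a, q s a = r s a + γ * ∑ s', P s a s' * q s' (π s')) {t : ℝ}
    (hV : ∀ s s', q s (π s) - q s' (π s') ≤ t) (s : S) (a : A) (s' : S) (a' : A) :
    q s a - q s' a' ≤ 1 + t := by
  have hdiff := sum_mul_sub_sum_mul_le (hP0 s a) (hP0 s' a') ((hP1 _ _).trans (hP1 _ _).symm) hV
  rw [hP1, one_mul] at hdiff
  rw [hπ s, hπ s']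
  nlinarith [hr1 s a, hr0 s' a', hV s s]

variable [Fintype A] [DecidableEq A]

/-- The kernel `P^π` on state-action pairs. -/
def stateActionKernel (P : S → A → S → ℝ) (π : S → A) : Matrix (S × A) (S × A) ℝ :=
  of fun x z => if z.2 = π z.1 then P x.1 x.2 z.1 else 0

theorem stateActionKernel_mulVec_apply (P : S → A → S → ℝ) (π : S → A) (g : S × A → ℝ)
    (x : S × A) : (stateActionKernel P π *ᵥ g) x = ∑ s', P x.1 x.2 s' * g (s', π s') := by
  simp [stateActionKernel, mulVec, dotProduct, Fintype.sum_prod_type, ite_mul]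

theorem stateActionKernel_mem_rowStochastic [DecidableEq S] {P : S → A → S → ℝ}
    (hP0 : ∀ s a s', 0 ≤ P s a s') (hP1 : ∀ s a, ∑ s', P s a s' = 1) (π : S → A) :
    stateActionKernel P π ∈ rowStochastic ℝ (S × A) := by
  refine mem_rowStochastic.2 ⟨fun x z => ?_, funext fun x => ?_⟩
  · simp only [stateActionKernel, of_apply]
    split_ifs
    exacts [hP0 _ _ _, le_rfl]
  · simp [stateActionKernel_mulVec_apply, hP1]

theorem one_sub_smul_stateActionKernel_mulVec [DecidableEq S] {P : S → A → S → ℝ}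
    {r q : S → A → ℝ} {γ : ℝ} {π : S → A}
    (hπ : ∀ s a, q s a = r s a + γ * ∑ s', P s a s' * q s' (π s')) :
    (1 - γ • stateActionKernel P π) *ᵥ (fun x => q x.1 x.2) = fun x => r x.1 x.2 := by
  ext x
  rw [one_sub_smul_mulVec_apply, stateActionKernel_mulVec_apply, hπ]
  ring

theorem rowVariance_stateActionKernel [DecidableEq S] {P : S → A → S → ℝ} {π : S → A}
    {v : S → ℝ} (q : S → A → ℝ) (hv : ∀ s a s', P s a s' * v s' = P s a s' * q s' (π s'))
    (x : S × A) :
    rowVariance (stateActionKernel P π) (fun z => q z.1 z.2) x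
      = ∑ s', P x.1 x.2 s' * v s' ^ 2 - (∑ s', P x.1 x.2 s' * v s') ^ 2 := by
  have hsq (s' : S) : P x.1 x.2 s' * v s' ^ 2 = P x.1 x.2 s' * q s' (π s') ^ 2 := by
    linear_combination (v s' + q s' (π s')) * hv x.1 x.2 s'
  simp only [rowVariance, stateActionKernel_mulVec_apply, hsq, hv]

end MDP

theorem nu_sq_le_of_uniform_doeblin_general
    {S A : Type*} [Fintype S] [DecidableEq S]
    [Fintype A] [DecidableEq A]
    -- the MDP data
    (r : S → A → ℝ) (hr0 : ∀ s a, 0 ≤ r s a) (hr1 : ∀ s a, r s a ≤ 1)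
    (P : S → A → S → ℝ) (hP0 : ∀ s a s', 0 ≤ P s a s') (hP1 : ∀ s a, ∑ s', P s a s' = 1)
    (γ : ℝ) (hγ0 : 0 < γ) (hγ1 : γ < 1)
    -- the optimal q-function (characterized by the Bellman optimality equation)
    (qstar : S → A → ℝ)
    (hqstar : ∀ s a, qstar s a = r s a + γ * ∑ s', P s a s' * (⨆ b, qstar s' b))
    -- optimality of a policy: its q-function equals q*
    (IsOptimal : (S → A) → Prop)
    (hIsOptimal : ∀ π : S → A, IsOptimal π ↔
      ∀ s a, qstar s a = r s a + γ * ∑ s', P s a s' * qstar s' (π s'))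
    -- every optimal policy π induces an (m^π, p^π)-Doeblin kernel
    (mπ : (S → A) → ℕ) (pπ : (S → A) → ℝ)
    (hdoeb : ∀ π : S → A, IsOptimal π →
      0 < mπ π ∧ 0 < pπ π ∧ pπ π ≤ 1 ∧
      ∃ ψ : S → ℝ, (∀ s', 0 ≤ ψ s') ∧ (∑ s', ψ s' = 1) ∧
        ∀ s s', pπ π * ψ s' ≤ ((Matrix.of fun u u' => P u (π u) u') ^ (mπ π)) s s')
    -- t* is the maximum of m^π/p^π over optimal policies
    (tstar : ℝ)
    (htstar : IsGreatest {x : ℝ | ∃ π : S → A, IsOptimal π ∧ x = (mπ π : ℝ) / pπ π} tstar) :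
    ∀ π : S → A, IsOptimal π → ∀ s a,
      (∑ y : S × A,
        (((1 - γ • (Matrix.of fun x z : S × A => if z.2 = π z.1 then P x.1 x.2 z.1 else 0))⁻¹
            (s, a) y) ^ 2) *
          (γ ^ 2 * (∑ s', P y.1 y.2 s' * (⨆ b, qstar s' b) ^ 2 -
            (∑ s', P y.1 y.2 s' * (⨆ b, qstar s' b)) ^ 2))) ≤
      6400 * tstar / (1 - γ) ^ 2 := by
  intro π hopt s a
  obtain ⟨hm, hp0, hp1, ψ, -, hψ, hmin⟩ := hdoeb π hopt
  have hπ := (hIsOptimal π).1 hopt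
  set t : ℝ := (mπ π : ℝ) / pπ π
  have ht : 1 ≤ t := by
    rw [le_div_iff₀ hp0]
    linarith [(Nat.one_le_cast.2 hm : (1 : ℝ) ≤ mπ π)]
  have hPπ : (of fun u u' => P u (π u) u') ∈ rowStochastic ℝ S :=
    mem_rowStochastic_iff_sum.2 ⟨fun _ _ => hP0 _ _ _, fun _ => hP1 _ _⟩
  have hV : ∀ s s', qstar s (π s) - qstar s' (π s') ≤ t :=
    sub_le_div_of_doeblin hPπ hγ0.le hγ1.le (ρ := fun s => r s (π s))
      (u := fun s => qstar s (π s)) (fun _ => hr0 _ _) (fun _ => hr1 _ _)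
      (funext fun s => hπ s (π s)) hp0 hp1 hψ hmin
  have hosc (x x' : S × A) : qstar x.1 x.2 - qstar x'.1 x'.2 ≤ 2 * t :=
    (sub_le_one_add_of_bellman hP0 hP1 hr0 hr1 hγ0.le hγ1.le hπ hV _ _ _ _).trans (by linarith)
  have hvar := sum_sq_inv_one_sub_smul_mul_rowVariance_le
    (stateActionKernel_mem_rowStochastic hP0 hP1 π) hγ0.le hγ1
    (one_sub_smul_stateActionKernel_mulVec hπ) (fun _ => hr0 _ _) (fun _ => hr1 _ _) hosc (s, a)
  simp only [rowVariance_stateActionKernel qstar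
    (mul_iSup_eq_mul_of_bellman hP0 hγ0.ne' hqstar hπ)] at hvar
  calc _ ≤ 2 * t / (1 - γ) ^ 2 := hvar
    _ ≤ 6400 * tstar / (1 - γ) ^ 2 := by
      gcongr
      · norm_num
      · exact htstar.2 ⟨π, hopt, rfl⟩

/-- if every optimal policy `π` induces an `(m^π,p^π)`-Doeblin kernel and
`t* = max_{π optimal} m^π/p^π ≤ 1/(1−γ)`, then
`max_{π optimal} max_{(s,a)} ν^π(M)(s,a)² ≤ 6400 t*/(1−γ)²`. -/
theorem nu_sq_le_of_uniform_doeblin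
    {S A : Type*} [Fintype S] [Nonempty S] [DecidableEq S]
    [Fintype A] [Nonempty A] [DecidableEq A]
    -- the MDP data
    (r : S → A → ℝ) (hr0 : ∀ s a, 0 ≤ r s a) (hr1 : ∀ s a, r s a ≤ 1)
    (P : S → A → S → ℝ) (hP0 : ∀ s a s', 0 ≤ P s a s') (hP1 : ∀ s a, ∑ s', P s a s' = 1)
    (γ : ℝ) (hγ0 : 0 < γ) (hγ1 : γ < 1)
    -- the optimal q-function (characterized by the Bellman optimality equation)
    (qstar : S → A → ℝ)
    (hqstar : ∀ s a, qstar s a = r s a + γ * ∑ s', P s a s' * (⨆ b, qstar s' b))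
    -- optimality of a policy: its q-function equals q*
    (IsOptimal : (S → A) → Prop)
    (hIsOptimal : ∀ π : S → A, IsOptimal π ↔
      ∀ s a, qstar s a = r s a + γ * ∑ s', P s a s' * qstar s' (π s'))
    -- every optimal policy π induces an (m^π, p^π)-Doeblin kernel
    (mπ : (S → A) → ℕ) (pπ : (S → A) → ℝ)
    (hdoeb : ∀ π : S → A, IsOptimal π →
      0 < mπ π ∧ 0 < pπ π ∧ pπ π ≤ 1 ∧
      ∃ ψ : S → ℝ, (∀ s', 0 ≤ ψ s') ∧ (∑ s', ψ s' = 1) ∧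
        ∀ s s', pπ π * ψ s' ≤ ((Matrix.of fun u u' => P u (π u) u') ^ (mπ π)) s s')
    -- t* is the maximum of m^π/p^π over optimal policies, and t* ≤ 1/(1−γ)
    (tstar : ℝ)
    (htstar : IsGreatest {x : ℝ | ∃ π : S → A, IsOptimal π ∧ x = (mπ π : ℝ) / pπ π} tstar)
    (htstar_le : tstar ≤ 1 / (1 - γ)) :
    ∀ π : S → A, IsOptimal π → ∀ s a,
      (∑ y : S × A,
        (((1 - γ • (Matrix.of fun x z : S × A => if z.2 = π z.1 then P x.1 x.2 z.1 else 0))⁻¹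
            (s, a) y) ^ 2) *
          (γ ^ 2 * (∑ s', P y.1 y.2 s' * (⨆ b, qstar s' b) ^ 2 -
            (∑ s', P y.1 y.2 s' * (⨆ b, qstar s' b)) ^ 2))) ≤
      6400 * tstar / (1 - γ) ^ 2 :=
  nu_sq_le_of_uniform_doeblin_general r hr0 hr1 P hP0 hP1 γ hγ0 hγ1 qstar hqstar IsOptimal
    hIsOptimal mπ pπ hdoeb tstar htstar
end
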